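/- arXiv:2511.01809 — 6 statements merged into one kernel-verified Lean document; each statement's English description precedes it below -/
import Mathlib

section
/- Let p and q be distinct primes with q dividing p−1, and let r be an integer with r ≢ 1 (mod p) and r^q ≡ 1 (mod p). Consider the group G = ⟨a, b ∣ a^p = b^{q²} = 1, a^b = a^r⟩. Then the center of G equals ⟨b^q⟩, and G/Z(G) is isomorphic to the nonabelian group C_p ⋊ C_q of order pq, but G has no subgroup isomorphic to this nonabelian group of order pq. -/
/-!
Conjugation by `b` acts on `⟨a⟩ ≃ ℤ/p` as multiplication by `r`, a unit of order `q`. Hence `bʲ`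
centralises `a` exactly when `q ∣ j`, while `aⁱbʲ` commutes with `b` only if `aⁱ = 1`; so
`Z(G) = ⟨b^q⟩`, of order `q`. The commutator of `a` and `b` is `a^(r-1) ∉ Z(G)`, so `G/Z(G)` is
nonabelian. If `aⁱbʲ` lies in a subgroup of order `pq`, then `b^(jpq) ∈ ⟨a⟩ ∩ ⟨b⟩ = 1` forces
`q ∣ j`; so such a subgroup lies in `⟨a⟩ Z(G)`, which is abelian.
-/

open Subgroup

section

variable {G : Type*} [Group G] {a b : G} {p q r : ℕ}

lemma zpow_eq_zpow_iff_intCast_eq {x : G} {m n : ℤ} :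
    x ^ m = x ^ n ↔ (m : ZMod (orderOf x)) = n := by
  rw [zpow_eq_zpow_iff_modEq, ZMod.intCast_eq_intCast_iff]

lemma conj_pow_zpow_of_conj_eq_pow (hab : b⁻¹ * a * b = a ^ r) (j : ℕ) (k : ℤ) :
    (b ^ j)⁻¹ * a ^ k * b ^ j = a ^ ((r : ℤ) ^ j * k) := by
  induction j with
  | zero => simp
  | succ j ih =>
    calc (b ^ (j + 1))⁻¹ * a ^ k * b ^ (j + 1) = b⁻¹ * ((b ^ j)⁻¹ * a ^ k * b ^ j) * b⁻¹⁻¹ := by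
          group
    _ = (b⁻¹ * a * b) ^ ((r : ℤ) ^ j * k) := by rw [ih, ← conj_zpow, inv_inv]
    _ = a ^ ((r : ℤ) ^ (j + 1) * k) := by rw [hab, ← zpow_natCast, ← zpow_mul]; ring_nf

lemma zpowers_normal_of_conj_eq_pow [Finite G] (hab : b⁻¹ * a * b = a ^ r)
    (hgen : closure {a, b} = ⊤) : (zpowers a).Normal := by
  have hb : b⁻¹ ∈ normalizer (zpowers a : Set G) := mem_normalizer_fintype fun _ ⟨k, hk⟩ =>
    ⟨r * k, by rw [← hk, ← conj_zpow, inv_inv, hab, ← zpow_natCast, ← zpow_mul]⟩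
  rw [← normalizer_eq_top_iff, eq_top_iff, ← hgen, closure_le]
  rintro _ (rfl | rfl)
  · exact le_normalizer (mem_zpowers _)
  · simpa using inv_mem hb

lemma exists_eq_zpow_mul_pow [Finite G] (hab : b⁻¹ * a * b = a ^ r)
    (hgen : closure {a, b} = ⊤) (g : G) : ∃ (i : ℤ) (j : ℕ), g = a ^ i * b ^ j := by
  have := zpowers_normal_of_conj_eq_pow hab hgen
  have hg : g ∈ ((zpowers a ⊔ zpowers b : Subgroup G) : Set G) := by
    rw [zpowers_eq_closure, zpowers_eq_closure, ← Subgroup.closure_union, Set.singleton_union, hgen]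
    trivial
  rw [normal_mul] at hg
  obtain ⟨_, ⟨i, rfl⟩, _, hy, rfl⟩ := hg
  obtain ⟨j, rfl⟩ := mem_powers_iff_mem_zpowers.mpr hy
  exact ⟨i, j, rfl⟩

lemma zpow_eq_one_of_commute (hab : b⁻¹ * a * b = a ^ r) (hp : p.Prime) (ha : orderOf a = p)
    (hr1 : (r : ZMod p) ≠ 1) {k : ℤ} (hk : Commute b (a ^ k)) : a ^ k = 1 := by
  have : Fact p.Prime := ⟨hp⟩
  have hfix : a ^ ((r : ℤ) ^ 1 * k) = a ^ k := by
    rw [← conj_pow_zpow_of_conj_eq_pow hab, pow_one, mul_assoc, ← hk.eq, inv_mul_cancel_left]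
  rw [zpow_eq_zpow_iff_intCast_eq, ha] at hfix
  rw [← zpow_zero a, zpow_eq_zpow_iff_intCast_eq, ha, Int.cast_zero]
  have : ((r : ZMod p) - 1) * k = 0 := by push_cast at hfix; linear_combination hfix
  exact (mul_eq_zero.mp this).resolve_left (sub_ne_zero.mpr hr1)

lemma pow_mem_center_of_conj_eq_pow (hab : b⁻¹ * a * b = a ^ r) (ha : orderOf a = p)
    (hrq : (r : ZMod p) ^ q = 1) (hgen : closure {a, b} = ⊤) : b ^ q ∈ center G := by
  rw [← centralizer_univ, ← coe_top, ← hgen, centralizer_closure, mem_centralizer_iff]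
  simp only [Set.mem_insert_iff, Set.mem_singleton_iff, forall_eq_or_imp, forall_eq]
  constructor
  · have hfix : a ^ ((r : ℤ) ^ q * 1) = a ^ (1 : ℤ) := by
      rw [zpow_eq_zpow_iff_intCast_eq, ha]; simp [hrq]
    rwa [← conj_pow_zpow_of_conj_eq_pow hab, zpow_one, mul_assoc, inv_mul_eq_iff_eq_mul] at hfix
  · exact (pow_succ' _ _).symm.trans (pow_succ _ _)

lemma center_eq_zpowers_pow [Finite G] (hab : b⁻¹ * a * b = a ^ r) (hgen : closure {a, b} = ⊤)
    (hp : p.Prime) (hq : q.Prime) (ha : orderOf a = p) (hr1 : (r : ZMod p) ≠ 1)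
    (hrq : (r : ZMod p) ^ q = 1) : center G = zpowers (b ^ q) := by
  refine le_antisymm (fun g hg => ?_)
    (zpowers_le.mpr (pow_mem_center_of_conj_eq_pow hab ha hrq hgen))
  obtain ⟨i, j, rfl⟩ := exists_eq_zpow_mul_pow hab hgen g
  have hai : a ^ i = 1 := by
    refine zpow_eq_one_of_commute hab hp ha hr1 (mul_right_cancel (b := b ^ j) ?_)
    have := mem_center_iff.mp hg b
    rwa [← mul_assoc, mul_assoc (a ^ i), ← pow_succ, pow_succ', ← mul_assoc] at this
  rw [hai, one_mul] at hg ⊢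
  have hrj : (r : ZMod p) ^ j = 1 := by
    have hfix : a ^ ((r : ℤ) ^ j * 1) = a ^ (1 : ℤ) := by
      rw [← conj_pow_zpow_of_conj_eq_pow hab, zpow_one, mul_assoc, mem_center_iff.mp hg a,
        inv_mul_cancel_left]
    rw [zpow_eq_zpow_iff_intCast_eq, ha] at hfix
    simpa using hfix
  have : Fact q.Prime := ⟨hq⟩
  obtain ⟨m, rfl⟩ : q ∣ j := orderOf_eq_prime hrq hr1 ▸ orderOf_dvd_of_pow_eq_one hrj
  rw [pow_mul]
  exact pow_mem (mem_zpowers _) m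

lemma not_commute_mk_center (hab : b⁻¹ * a * b = a ^ r) (hp : p.Prime) (ha : orderOf a = p)
    (hr1 : (r : ZMod p) ≠ 1) : ¬ Commute (a : G ⧸ center G) (b : G ⧸ center G) := by
  intro h
  have hmem : a ^ ((r : ℤ) - 1) ∈ center G := by
    have := QuotientGroup.eq.mp (show ((b * a : G) : G ⧸ center G) = (a * b : G) by
      rw [QuotientGroup.mk_mul, QuotientGroup.mk_mul]; exact h.eq.symm)
    rwa [sub_eq_neg_add, zpow_add, zpow_neg_one, zpow_natCast, ← hab, show
      a⁻¹ * (b⁻¹ * a * b) = (b * a)⁻¹ * (a * b) by group]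
  have := zpow_eq_one_of_commute hab hp ha hr1 (mem_center_iff.mp hmem b)
  rw [← zpow_zero a, zpow_eq_zpow_iff_intCast_eq, ha] at this
  push_cast at this
  exact hr1 (sub_eq_zero.mp this)

lemma pow_mem_zpowers_of_zpow_mul_pow_pow_eq_one [(zpowers a).Normal] {i : ℤ} {j n : ℕ}
    (h : (a ^ i * b ^ j) ^ n = 1) : b ^ (j * n) ∈ zpowers a := by
  have hai : ((a ^ i : G) : G ⧸ zpowers a) = 1 :=
    (QuotientGroup.eq_one_iff _).mpr (zpow_mem (mem_zpowers a) i)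
  rw [← QuotientGroup.eq_one_iff, pow_mul]
  simpa [hai] using congrArg (QuotientGroup.mk (s := zpowers a)) h

lemma dvd_of_zpow_mul_pow_pow_eq_one [Finite G] (hab : b⁻¹ * a * b = a ^ r)
    (hgen : closure {a, b} = ⊤) (hp : p.Prime) (hq : q.Prime) (hpq : p ≠ q) (ha : orderOf a = p)
    (hb : orderOf b = q ^ 2) {i : ℤ} {j : ℕ} (h : (a ^ i * b ^ j) ^ (p * q) = 1) : q ∣ j := by
  have := zpowers_normal_of_conj_eq_pow hab hgen
  have hdisj : Disjoint (zpowers a) (zpowers b) := by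
    refine disjoint_of_coprime_natCard ?_
    rw [Nat.card_zpowers, Nat.card_zpowers, ha, hb]
    exact ((Nat.coprime_primes hp hq).mpr hpq).pow_right 2
  have hbj : b ^ (j * (p * q)) = 1 := disjoint_def.mp hdisj
    (pow_mem_zpowers_of_zpow_mul_pow_pow_eq_one h) (pow_mem (mem_zpowers b) _)
  have hdvd : q * q ∣ j * p * q := by
    rw [← sq, ← hb, mul_assoc]; exact orderOf_dvd_of_pow_eq_one hbj
  rw [Nat.mul_dvd_mul_iff_right hq.pos] at hdvd
  exact (hq.dvd_mul.mp hdvd).resolve_right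
    fun hqp => hpq ((Nat.prime_dvd_prime_iff_eq hq hp).mp hqp).symm

lemma commute_of_natCard_eq_mul [Finite G] (hab : b⁻¹ * a * b = a ^ r)
    (hgen : closure {a, b} = ⊤) (hp : p.Prime) (hq : q.Prime) (hpq : p ≠ q) (ha : orderOf a = p)
    (hb : orderOf b = q ^ 2) (hrq : (r : ZMod p) ^ q = 1) {H : Subgroup G}
    (hH : Nat.card H = p * q) (x y : H) : Commute x y := by
  have hdecomp : ∀ g ∈ H, ∃ i : ℤ, ∃ c ∈ center G, g = a ^ i * c := by
    intro g hg
    obtain ⟨i, j, rfl⟩ := exists_eq_zpow_mul_pow hab hgen g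
    have hpow : (a ^ i * b ^ j) ^ (p * q) = 1 := by
      simpa [hH] using congrArg Subtype.val (pow_card_eq_one' (x := (⟨_, hg⟩ : H)))
    obtain ⟨m, rfl⟩ := dvd_of_zpow_mul_pow_pow_eq_one hab hgen hp hq hpq ha hb hpow
    exact ⟨i, _, pow_mem (pow_mem_center_of_conj_eq_pow hab ha hrq hgen) m, by rw [pow_mul]⟩
  obtain ⟨i, c, hc, hx⟩ := hdecomp x x.2
  obtain ⟨i', c', hc', hy⟩ := hdecomp y y.2
  have : Commute (x : G) y := by
    rw [hx, hy]
    exact ((Commute.zpow_zpow_self a i i').mul_right (mem_center_iff.mp hc' _)).mul_left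
      (mem_center_iff.mp hc _).symm
  exact Subtype.ext this.eq

end

theorem stmt3_general (p q r : ℕ) (hp : p.Prime) (hq : q.Prime) (hpq : p ≠ q)
    (hr1 : (r : ZMod p) ≠ 1) (hrq : (r : ZMod p) ^ q = 1)
    (G : Type*) [Group G] [Finite G] (a b : G)
    (ha : orderOf a = p) (hb : orderOf b = q ^ 2)
    (hab : b⁻¹ * a * b = a ^ r)
    (hgen : Subgroup.closure {a, b} = ⊤)
    (hcard : Nat.card G = p * q ^ 2) :
    Subgroup.center G = Subgroup.zpowers (b ^ q) ∧
    Nat.card (G ⧸ Subgroup.center G) = p * q ∧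
    (¬ ∀ x y : G ⧸ Subgroup.center G, Commute x y) ∧
    ∀ H : Subgroup G, Nat.card H = p * q → ∀ x y : H, Commute x y := by
  have hZ := center_eq_zpowers_pow hab hgen hp hq ha hr1 hrq
  have hcardZ : Nat.card (center G) = q := by
    rw [hZ, Nat.card_zpowers, orderOf_pow_of_dvd hq.ne_zero (hb ▸ dvd_pow_self q two_ne_zero), hb,
      sq, Nat.mul_div_cancel _ hq.pos]
  refine ⟨hZ, ?_, fun h => not_commute_mk_center hab hp ha hr1 (h _ _),
    fun H hH => commute_of_natCard_eq_mul hab hgen hp hq hpq ha hb hrq hH⟩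
  have hLagrange := card_eq_card_quotient_mul_card_subgroup (center G)
  rw [hcard, hcardZ, sq, ← mul_assoc] at hLagrange
  exact (Nat.eq_of_mul_eq_mul_right hq.pos hLagrange).symm

/-- For `G = ⟨a, b ∣ a^p = b^{q²} = 1, a^b = a^r⟩` with `r` of multiplicative order `q`
modulo `p`: the center of `G` is `⟨b^q⟩`, `G/Z(G)` is the nonabelian group of order `pq`,
but `G` has no nonabelian subgroup of order `pq`. -/
theorem stmt3 (p q r : ℕ) (hp : p.Prime) (hq : q.Prime) (hpq : p ≠ q) (hqp : q ∣ p - 1)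
    (hr1 : (r : ZMod p) ≠ 1) (hrq : (r : ZMod p) ^ q = 1)
    (G : Type*) [Group G] [Finite G] (a b : G)
    (ha : orderOf a = p) (hb : orderOf b = q ^ 2)
    (hab : b⁻¹ * a * b = a ^ r)
    (hgen : Subgroup.closure {a, b} = ⊤)
    (hcard : Nat.card G = p * q ^ 2) :
    Subgroup.center G = Subgroup.zpowers (b ^ q) ∧
    Nat.card (G ⧸ Subgroup.center G) = p * q ∧
    (¬ ∀ x y : G ⧸ Subgroup.center G, Commute x y) ∧
    ∀ H : Subgroup G, Nat.card H = p * q → ∀ x y : H, Commute x y :=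
  stmt3_general p q r hp hq hpq hr1 hrq G a b ha hb hab hgen hcard
end

section
/- Let G be a finite group in which every minimal normal subgroup is nonabelian, let p and q be distinct primes dividing |G|, and suppose G has no element of order pq. If M = S₁ × ⋯ × S_t is a minimal normal subgroup of G with the S_i isomorphic nonabelian simple groups, and pq divides |M|, then t = 1 (i.e., M is simple). -/
/-! If `t ≥ 2`, Cauchy's theorem gives elements of order `p` and `q` in `S`; placed in two
different coordinates of `S ^ t` they commute, so their product has order `pq`, and its
image in `M ≤ G` contradicts the hypothesis on `G`. -/

lemma orderOf_mulSingle_mul_mulSingle {ι : Type*} [DecidableEq ι] {M : ι → Type*}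
    [∀ i, Monoid (M i)] {i j : ι} (hij : i ≠ j) (a : M i) (b : M j)
    (hab : (orderOf a).Coprime (orderOf b)) :
    orderOf (Pi.mulSingle i a * Pi.mulSingle j b) = orderOf a * orderOf b := by
  rw [(Pi.mulSingle_commute hij a b).orderOf_mul_eq_mul_orderOf_of_coprime
      (by simpa only [orderOf_piMulSingle]),
    orderOf_piMulSingle, orderOf_piMulSingle]

lemma exists_orderOf_eq_mul_of_ne {ι S : Type*} [Group S] [Finite S] {p q : ℕ}
    (hp : p.Prime) (hq : q.Prime) (hpq : p ≠ q) (hpS : p ∣ Nat.card S)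
    (hqS : q ∣ Nat.card S) {i j : ι} (hij : i ≠ j) :
    ∃ x : ι → S, orderOf x = p * q := by
  classical
  have := Fact.mk hp
  have := Fact.mk hq
  obtain ⟨a, ha⟩ := exists_prime_orderOf_dvd_card' p hpS
  obtain ⟨b, hb⟩ := exists_prime_orderOf_dvd_card' q hqS
  refine ⟨Pi.mulSingle i a * Pi.mulSingle j b, ?_⟩
  rw [orderOf_mulSingle_mul_mulSingle (M := fun _ ↦ S) hij a b
    (by rwa [ha, hb, Nat.coprime_primes hp hq]), ha, hb]

lemma Nat.Prime.dvd_card_of_dvd_card_fun {ι S : Type*} [Finite ι] {p : ℕ} (hp : p.Prime)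
    (h : p ∣ Nat.card (ι → S)) : p ∣ Nat.card S :=
  hp.dvd_of_dvd_pow (Nat.card_fun (α := ι) ▸ h)

theorem stmt4_general (p q : ℕ) (hp : p.Prime) (hq : q.Prime) (hpq : p ≠ q)
    (G : Type*) [Group G]
    (hnopq : ∀ g : G, orderOf g ≠ p * q)
    (M : Subgroup G)
    (t : ℕ) (ht : 0 < t)
    (S : Type*) [Group S] [Finite S]
    (e : M ≃* (Fin t → S))
    (hdvd : p * q ∣ Nat.card M) :
    t = 1 := by
  by_contra ht1
  have hcard : p * q ∣ Nat.card (Fin t → S) := Nat.card_congr e.toEquiv ▸ hdvd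
  obtain ⟨x, hx⟩ := exists_orderOf_eq_mul_of_ne hp hq hpq
    (hp.dvd_card_of_dvd_card_fun ((dvd_mul_right p q).trans hcard))
    (hq.dvd_card_of_dvd_card_fun ((dvd_mul_left q p).trans hcard))
    (i := (⟨0, ht⟩ : Fin t)) (j := ⟨1, by omega⟩) (by simp [Fin.ext_iff])
  exact hnopq (e.symm x) (by rw [Subgroup.orderOf_coe, MulEquiv.orderOf_eq, hx])

/-- If every minimal normal subgroup of `G` is nonabelian, `G` has no element of
order `pq`, and `M ≅ S^t` is a minimal normal subgroup of `G` which is a direct product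
of `t` copies of a nonabelian simple group `S` with `pq ∣ |M|`, then `t = 1`. -/
theorem stmt4 (p q : ℕ) (hp : p.Prime) (hq : q.Prime) (hpq : p ≠ q)
    (G : Type*) [Group G] [Finite G]
    (hminnonab : ∀ N : Subgroup G, N.Normal → N ≠ ⊥ →
      (∀ N' : Subgroup G, N'.Normal → N' ≤ N → N' = ⊥ ∨ N' = N) →
      ¬ ∀ x y : N, Commute x y)
    (hnopq : ∀ g : G, orderOf g ≠ p * q)
    (M : Subgroup G) [M.Normal] (hMbot : M ≠ ⊥)
    (hMmin : ∀ N : Subgroup G, N.Normal → N ≤ M → N = ⊥ ∨ N = M)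
    (t : ℕ) (ht : 0 < t)
    (S : Type*) [Group S] [Finite S] [IsSimpleGroup S]
    (hSnonab : ¬ ∀ x y : S, Commute x y)
    (e : M ≃* (Fin t → S))
    (hdvd : p * q ∣ Nat.card M) :
    t = 1 :=
  stmt4_general p q hp hq hpq G hnopq M t ht S e hdvd
end

section
/- Let G be a finite group, M = S₁ × ⋯ × S_t a minimal normal subgroup of G with the S_i nonabelian simple, let K = ⋂_{i=1}^t N_G(S_i), and let p, q be distinct primes with p dividing each |S_i| and q not dividing |K|. If y ∈ G has order q, then either G has an element of order pq, or the image of y in G/K (viewed as a permutation of {S₁, …, S_t}) has a cycle of length q, and in the latter case, choosing x₁ ∈ S₁ of order p (after renumbering so the cycle is (S₁, …, S_q)) and setting x = x₁·x₁^y·⋯·x₁^{y^{q−1}}, the element xy has order pq; in particular, G always has an element of order pq in this situation when q divides |G/K|. -/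
open Subgroup Function
open scoped Pointwise

/-! An element `y` of order `q` lies outside `K` because `q ∤ |K|`, so it moves some `Sᵢ₀`; as `q`
is prime, the conjugates `Sᵢ₀^(yᵏ)`, `0 ≤ k < q`, are then `q` distinct factors of `M`. For
`x₁ ∈ Sᵢ₀` of order `p` the conjugates `x₁^(yᵏ)` therefore commute pairwise, and their product `x`
has order `p`: it is nontrivial since its `Sᵢ₀`-component is `x₁`. Conjugation by `y` permutes the
factors of `x` cyclically, so `x` commutes with `y` and `xy` has order `pq`. -/

theorem list_prod_pow_of_commute {M : Type*} [Monoid M] :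
    ∀ (l : List M), (∀ a ∈ l, ∀ b ∈ l, Commute a b) → ∀ n : ℕ,
      l.prod ^ n = (l.map (· ^ n)).prod
  | [], _, n => by simp
  | a :: l, h, n => by
    have hal : Commute a l.prod :=
      Commute.list_prod_right _ _ fun b hb => h a (.head _) b (.tail _ hb)
    rw [List.prod_cons, List.map_cons, List.prod_cons, hal.mul_pow,
      list_prod_pow_of_commute l (fun u hu v hv => h u (.tail _ hu) v (.tail _ hv)) n]

section ConjOrbit

variable {G : Type*} [Group G]

-- The paper's `x₁ x₁^y ⋯ x₁^(y^(q-1))`, with left conjugation `MulAut.conj g x = g * x * g⁻¹`.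
def conjOrbitProd (y x : G) (n : ℕ) : G :=
  ((List.range n).map fun k => MulAut.conj (y ^ k) x).prod

theorem conjOrbitProd_succ (y x : G) (n : ℕ) :
    conjOrbitProd y x (n + 1) =
      x * ((List.range n).map fun k => MulAut.conj (y ^ (k + 1)) x).prod := by
  simp [conjOrbitProd, List.prod_range_succ']

theorem conjOrbitProd_pow {y x : G} {n : ℕ}
    (h : ∀ a < n, ∀ b < n, Commute (MulAut.conj (y ^ a) x) (MulAut.conj (y ^ b) x)) (m : ℕ) :
    conjOrbitProd y x n ^ m = conjOrbitProd y (x ^ m) n := by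
  rw [conjOrbitProd, list_prod_pow_of_commute, List.map_map]
  · simp only [conjOrbitProd, comp_def, map_pow]
  · simp only [List.mem_map, List.mem_range]
    rintro _ ⟨a, ha, rfl⟩ _ ⟨b, hb, rfl⟩
    exact h a ha b hb

theorem commute_conjOrbitProd {y x : G} {n : ℕ} (hy : y ^ n = 1)
    (h : ∀ k < n, Commute x (MulAut.conj (y ^ k) x)) : Commute y (conjOrbitProd y x n) := by
  cases n with
  | zero => simp [conjOrbitProd]
  | succ n =>
  set tail := ((List.range n).map fun k => MulAut.conj (y ^ (k + 1)) x).prod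
  have hx_tail : Commute x tail := by
    refine Commute.list_prod_right _ _ ?_
    simp only [List.mem_map, List.mem_range]
    rintro _ ⟨k, hk, rfl⟩
    exact h (k + 1) (by omega)
  have hfix : MulAut.conj y (conjOrbitProd y x (n + 1)) = conjOrbitProd y x (n + 1) :=
    calc MulAut.conj y (conjOrbitProd y x (n + 1))
        = ((List.range (n + 1)).map fun k => MulAut.conj (y ^ (k + 1)) x).prod := by
          simp only [conjOrbitProd, map_list_prod, List.map_map, comp_def, ← MulAut.mul_apply,
            ← map_mul, pow_succ']
      _ = tail * x := by rw [List.prod_range_succ, hy, map_one, MulAut.one_apply]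
      _ = conjOrbitProd y x (n + 1) := by rw [conjOrbitProd_succ, hx_tail.eq]
  rw [MulAut.conj_apply, mul_inv_eq_iff_eq_mul] at hfix
  exact hfix

theorem conjOrbitProd_ne_one {H K : Subgroup G} (hHK : Disjoint H K) {y x : G} (hx : x ∈ H)
    (hx1 : x ≠ 1) {n : ℕ} (hK : ∀ k < n, MulAut.conj (y ^ (k + 1)) x ∈ K) :
    conjOrbitProd y x (n + 1) ≠ 1 := by
  have htail : ((List.range n).map fun k => MulAut.conj (y ^ (k + 1)) x).prod ∈ K := by
    refine list_prod_mem ?_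
    simp only [List.mem_map, List.mem_range]
    rintro _ ⟨k, hk, rfl⟩
    exact hK k hk
  rw [conjOrbitProd_succ, Ne, mul_eq_one_iff_eq_inv]
  intro hx_inv
  exact hx1 (disjoint_def.1 hHK hx (hx_inv ▸ inv_mem htail))

theorem map_conj_pow_injOn {q : ℕ} [Fact q.Prime] {y : G} (hy : y ^ q = 1) {H : Subgroup G}
    (hyH : y ∉ normalizer (H : Set G)) :
    (Set.Iio q).InjOn fun k : ℕ => H.map (MulAut.conj (y ^ k)).toMonoidHom := by
  have hiter (k : ℕ) :
      (ConjAct.toConjAct y • ·)^[k] H = H.map (MulAut.conj (y ^ k)).toMonoidHom := by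
    rw [smul_iterate, ← map_pow]
    rfl
  have hperiod : minimalPeriod (ConjAct.toConjAct y • ·) H = q := by
    refine minimalPeriod_eq_prime ?_ fun hfix => hyH (conjAct_pointwise_smul_iff.1 hfix)
    rw [IsPeriodicPt, IsFixedPt, hiter, hy, map_one]
    exact map_id H
  intro a ha b hb hab
  rw [Set.mem_Iio, ← hperiod] at ha hb
  exact iterate_injOn_Iio_minimalPeriod ha hb (by simpa only [hiter] using hab)

theorem ne_of_map_conj_pow_eq {ι : Type*} {S : ι → Subgroup G} {q : ℕ} [Fact q.Prime] {y : G}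
    (hy : y ^ q = 1) {i₀ : ι} (hyN : y ∉ normalizer (S i₀ : Set G)) {a b : ℕ} (ha : a < q)
    (hb : b < q) (hab : a ≠ b) {i j : ι} (hi : (S i₀).map (MulAut.conj (y ^ a)).toMonoidHom = S i)
    (hj : (S i₀).map (MulAut.conj (y ^ b)).toMonoidHom = S j) : i ≠ j := by
  rintro rfl
  exact hab (map_conj_pow_injOn hy hyN ha hb (hi.trans hj.symm))

theorem orderOf_conjOrbitProd_mul {ι : Type*} {S : ι → Subgroup G}
    (hcomm : ∀ i j, i ≠ j → ∀ x ∈ S i, ∀ y ∈ S j, Commute x y) (hind : iSupIndep S)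
    (hconj : ∀ (g : G) (i : ι), ∃ j, (S i).map (MulAut.conj g).toMonoidHom = S j)
    {p q : ℕ} [hp : Fact p.Prime] [hq : Fact q.Prime] (hpq : p ≠ q) {i₀ : ι} {x y : G}
    (hx : x ∈ S i₀) (hxp : orderOf x = p) (hyq : orderOf y = q)
    (hyN : y ∉ normalizer (S i₀ : Set G)) :
    orderOf (conjOrbitProd y x q * y) = p * q := by
  have hy : y ^ q = 1 := hyq ▸ pow_orderOf_eq_one y
  choose j hj using fun k : ℕ => hconj (y ^ k) i₀
  have hxj (k : ℕ) : MulAut.conj (y ^ k) x ∈ S (j k) := hj k ▸ mem_map_of_mem _ hx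
  have hpairwise : ∀ a < q, ∀ b < q,
      Commute (MulAut.conj (y ^ a) x) (MulAut.conj (y ^ b) x) := by
    intro a ha b hb
    rcases eq_or_ne a b with rfl | hab
    · exact Commute.refl _
    · exact hcomm _ _ (ne_of_map_conj_pow_eq hy hyN ha hb hab (hj a) (hj b)) _ (hxj a) _ (hxj b)
  obtain ⟨n, rfl⟩ : ∃ n, q = n + 1 := ⟨q - 1, (Nat.sub_add_cancel hq.out.one_le).symm⟩
  have hoff : ∀ k < n, MulAut.conj (y ^ (k + 1)) x ∈ ⨆ (i) (_ : i ≠ i₀), S i := by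
    intro k hk
    have hS₀ : (S i₀).map (MulAut.conj (y ^ 0)).toMonoidHom = S i₀ := by
      rw [pow_zero, map_one]
      exact map_id _
    have hi : j (k + 1) ≠ i₀ :=
      ne_of_map_conj_pow_eq hy hyN (by omega) (by omega) (by omega) (hj (k + 1)) hS₀
    exact mem_iSup_of_mem (j (k + 1)) (mem_iSup_of_mem hi (hxj (k + 1)))
  have hx1 : x ≠ 1 := fun h => hp.out.ne_one (by rw [← hxp, h, orderOf_one])
  have hprod : orderOf (conjOrbitProd y x (n + 1)) = p := by
    refine orderOf_eq_prime ?_ (conjOrbitProd_ne_one (hind i₀) hx hx1 hoff)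
    rw [conjOrbitProd_pow hpairwise, ← hxp, pow_orderOf_eq_one]
    simp [conjOrbitProd]
  have hcomm_y : Commute (conjOrbitProd y x (n + 1)) y := by
    refine (commute_conjOrbitProd hy fun k hk => ?_).symm
    simpa using hpairwise 0 (by omega) k hk
  have hcop : (orderOf (conjOrbitProd y x (n + 1))).Coprime (orderOf y) := by
    rwa [hprod, hyq, Nat.coprime_primes hp.out hq.out]
  rw [hcomm_y.orderOf_mul_eq_mul_orderOf_of_coprime hcop, hprod, hyq]

end ConjOrbit

theorem stmt5_general (p q : ℕ) (hp : p.Prime) (hq : q.Prime) (hpq : p ≠ q)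
    (G : Type*) [Group G] [Finite G]
    (t : ℕ) (S : Fin t → Subgroup G)
    (hcomm : ∀ i j, i ≠ j → ∀ x ∈ S i, ∀ y ∈ S j, Commute x y)
    (hind : iSupIndep S)
    (hconj : ∀ (g : G) (i : Fin t), ∃ j, (S i).map (MulAut.conj g).toMonoidHom = S j)
    (hpdvd : ∀ i, p ∣ Nat.card (S i))
    (hK : ¬ q ∣ Nat.card (⨅ i, Subgroup.normalizer (S i : Set G) : Subgroup G))
    (hqG : q ∣ Nat.card G) :
    ∃ g : G, orderOf g = p * q := by
  have := Fact.mk hp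
  have := Fact.mk hq
  obtain ⟨y, hy⟩ := exists_prime_orderOf_dvd_card' q hqG
  obtain ⟨i₀, hyN⟩ : ∃ i, y ∉ normalizer (S i : Set G) := by
    by_contra! h
    exact hK (hy ▸ orderOf_dvd_natCard _ (mem_iInf.2 h))
  obtain ⟨x, hx⟩ := exists_prime_orderOf_dvd_card' p (hpdvd i₀)
  exact ⟨_, orderOf_conjOrbitProd_mul hcomm hind hconj hpq x.2 (by rwa [orderOf_coe]) hy hyN⟩

/-- Let `M = S₁ × ⋯ × S_t` be a minimal normal subgroup of `G`, with the `Sᵢ`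
nonabelian simple subgroups permuted by conjugation, `K = ⋂ N_G(Sᵢ)`, `p ∣ |Sᵢ|`
for all `i` and `q ∤ |K|`. If `q ∣ |G|` then `G` has an element of order `pq`. -/
theorem stmt5 (p q : ℕ) (hp : p.Prime) (hq : q.Prime) (hpq : p ≠ q)
    (G : Type*) [Group G] [Finite G]
    (t : ℕ) (ht : 0 < t) (S : Fin t → Subgroup G)
    (hsimple : ∀ i, IsSimpleGroup (S i))
    (hnonab : ∀ i, ¬ ∀ x y : (S i), Commute x y)
    (hcomm : ∀ i j, i ≠ j → ∀ x ∈ S i, ∀ y ∈ S j, Commute x y)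
    (hind : iSupIndep S)
    (hnormalM : (⨆ i, S i).Normal)
    (hMmin : ∀ N : Subgroup G, N.Normal → N ≤ ⨆ i, S i → N = ⊥ ∨ N = ⨆ i, S i)
    (hconj : ∀ (g : G) (i : Fin t), ∃ j, (S i).map (MulAut.conj g).toMonoidHom = S j)
    (hpdvd : ∀ i, p ∣ Nat.card (S i))
    (hK : ¬ q ∣ Nat.card (⨅ i, Subgroup.normalizer (S i : Set G) : Subgroup G))
    (hqG : q ∣ Nat.card G) :
    ∃ g : G, orderOf g = p * q :=
  stmt5_general p q hp hq hpq G t S hcomm hind hconj hpdvd hK hqG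
end

section
/- Let H = M ⋊ (P ⋊ ⟨b⟩) be a finite group where M is an elementary abelian q-group, P = ⟨a⟩ has prime order p ≠ q, ⟨b⟩ has order q^k acting faithfully on P, the kernel of the action of P on M is trivial (MP is Frobenius with kernel M), and C_M(P) = 1. Then the number of Sylow p-subgroups of H equals |M|, and the normalizer N_H(P₀) of any Sylow p-subgroup P₀ of H is isomorphic to the Frobenius group C_p ⋊ C_{q^k}. -/
/-!
The normalizer of `A = ⟨a⟩` is `K = ⟨a, b⟩`: write an element normalizing `A` as `m c` with
`m ∈ M`, `c ∈ K`; then `m` normalizes `A`, so `[m, a] ∈ M ∩ A = 1`, and `m = 1` because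
`C_M(a) = 1`. As `|K| = p q^k` and `|M|` is a power of `q`, `A` is a Sylow `p`-subgroup, hence
`n_p = [H : K] = |M|`. Every Sylow `p`-subgroup is a conjugate of `A`, and conjugation carries
`a, b` into its normalizer with the same orders and the same action of `b` on `a`.
-/

open Pointwise Subgroup

namespace Subgroup

variable {G : Type*} [Group G]

theorem commute_of_mem_normalizer_of_disjoint {M A : Subgroup G} [hM : M.Normal]
    (hMA : Disjoint M A) {m x : G} (hm : m ∈ M) (hmA : m ∈ normalizer (A : Set G))
    (hx : x ∈ A) : Commute m x := by
  rw [← commutatorElement_eq_one_iff_commute, commutatorElement_def]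
  refine disjoint_def.mp hMA ?_ ?_
  · simpa only [mul_assoc] using mul_mem hm (hM.conj_mem _ (inv_mem hm) x)
  · exact mul_mem ((mem_normalizer_iff.mp hmA x).mp hx) (inv_mem hx)

theorem normalizer_eq_of_isComplement' {M K A : Subgroup G} [M.Normal]
    (hMK : IsComplement' M K) (hAK : A ≤ K) (hKA : K ≤ normalizer (A : Set G))
    (hfree : ∀ m ∈ M, (∀ x ∈ A, Commute m x) → m = 1) : normalizer (A : Set G) = K := by
  refine le_antisymm (fun h hh => ?_) hKA
  obtain ⟨m, hm, c, hc, rfl⟩ : h ∈ (M : Set G) * K := by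
    rw [← normal_mul, hMK.sup_eq_top]; trivial
  have hmA : m ∈ normalizer (A : Set G) := by simpa using mul_mem hh (inv_mem (hKA hc))
  obtain rfl := hfree m hm fun x hx =>
    commute_of_mem_normalizer_of_disjoint (hMK.disjoint.mono_right hAK) hm hmA hx
  simpa using hc

theorem closure_pair_le_normalizer_zpowers {a b : G} (hb : b ∈ normalizer (zpowers a : Set G)) :
    closure {a, b} ≤ normalizer (zpowers a : Set G) := by
  refine (closure_le _).mpr ?_
  rintro x (rfl | rfl)
  exacts [le_normalizer (mem_zpowers x), hb]

theorem card_closure_pair_of_mem_normalizer [Finite G] {a b : G}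
    (hb : b ∈ normalizer (zpowers a : Set G)) (hab : (orderOf a).Coprime (orderOf b)) :
    Nat.card (closure {a, b}) = orderOf a * orderOf b := by
  have hclosure : closure {a, b} = zpowers b ⊔ zpowers a := by
    rw [Set.insert_eq, closure_union, ← zpowers_eq_closure, ← zpowers_eq_closure, sup_comm]
  have hle : Nat.card (closure {a, b}) ≤ orderOf a * orderOf b := by
    rw [← Nat.card_zpowers a, ← Nat.card_zpowers b, mul_comm, hclosure,
      ← SetLike.coe_sort_coe, coe_mul_of_left_le_normalizer_right _ _ (zpowers_le.mpr hb)]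
    exact Set.natCard_mul_le
  refine le_antisymm hle (Nat.le_of_dvd Nat.card_pos (hab.mul_dvd_of_dvd_of_dvd ?_ ?_)) <;>
    rw [← Nat.card_zpowers] <;> exact card_dvd_of_le (hclosure ▸ (by simp))

end Subgroup

namespace Sylow

variable {G : Type*} [Group G] {p : ℕ}

theorem mulAut_conj_mem_normalizer_smul {P : Sylow p G} {x : G}
    (hx : x ∈ normalizer ((P : Subgroup G) : Set G)) (g : G) :
    MulAut.conj g x ∈ normalizer (((g • P : Sylow p G) : Subgroup G) : Set G) := by
  have hPx : x • P = P := smul_eq_iff_mem_normalizer.mpr hx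
  refine smul_eq_iff_mem_normalizer.mp ?_
  rw [MulAut.conj_apply, smul_smul, inv_mul_cancel_right, mul_smul, hPx]

theorem card_normalizer_eq [Fact p.Prime] [Finite G] (P Q : Sylow p G) :
    Nat.card (normalizer ((P : Subgroup G) : Set G)) =
      Nat.card (normalizer ((Q : Subgroup G) : Set G)) := by
  have hindex : (normalizer ((P : Subgroup G) : Set G)).index =
      (normalizer ((Q : Subgroup G) : Set G)).index :=
    P.card_eq_index_normalizer.symm.trans Q.card_eq_index_normalizer
  refine Nat.eq_of_mul_eq_mul_right (Nat.pos_of_ne_zero (FiniteIndex.index_ne_zero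
    (H := normalizer ((P : Subgroup G) : Set G)))) ?_
  rw [card_mul_index, hindex, card_mul_index]

end Sylow

theorem MulEquiv.pow_mul_mul_inv_pow_eq_iff {G G' : Type*} [Group G] [Group G']
    (e : G ≃* G') (u v : G) (j : ℕ) :
    e v ^ j * e u * (e v ^ j)⁻¹ = e u ↔ v ^ j * u * (v ^ j)⁻¹ = u := by
  rw [← map_pow, ← map_inv, ← map_mul, ← map_mul, e.injective.eq_iff]

theorem stmt9_general (p q k : ℕ) (hp : p.Prime) (hq : q.Prime) (hpq : p ≠ q)
    (H : Type*) [Group H] [Finite H]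
    (M : Subgroup H) [M.Normal]
    (hMel : ∀ x : M, x ^ q = 1)
    (a b : H) (ha : orderOf a = p) (hb : orderOf b = q ^ k)
    (hbnorm : b ∈ Subgroup.normalizer ((Subgroup.zpowers a : Subgroup H) : Set H))
    (hfaith : ∀ j : ℕ, b ^ j * a * (b ^ j)⁻¹ = a ↔ q ^ k ∣ j)
    (hcompl : M ⊓ Subgroup.closure {a, b} = ⊥)
    (htop : M ⊔ Subgroup.closure {a, b} = ⊤)
    (hfpf : ∀ m ∈ M, Commute m a → m = 1) :
    Nat.card (Sylow p H) = Nat.card M ∧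
    ∀ P₀ : Sylow p H, ∃ u v : H,
      u ∈ Subgroup.normalizer ((P₀ : Subgroup H) : Set H) ∧ v ∈ Subgroup.normalizer ((P₀ : Subgroup H) : Set H) ∧
      orderOf u = p ∧ orderOf v = q ^ k ∧
      Nat.card (Subgroup.normalizer ((P₀ : Subgroup H) : Set H)) = p * q ^ k ∧
      (∀ j : ℕ, v ^ j * u * (v ^ j)⁻¹ = u ↔ q ^ k ∣ j) := by
  have := Fact.mk hp
  set A := zpowers a
  set K := closure ({a, b} : Set H)
  have hAK : A ≤ K := zpowers_le.mpr (subset_closure (by simp))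
  have hMK : M.IsComplement' K :=
    isComplement'_of_disjoint_and_mul_eq_univ (disjoint_iff.mpr hcompl)
      (by rw [← normal_mul, htop, coe_top])
  have hNA : normalizer (A : Set H) = K :=
    normalizer_eq_of_isComplement' hMK hAK (closure_pair_le_normalizer_zpowers hbnorm)
      fun m hm hcomm => hfpf m hm (hcomm a (mem_zpowers a))
  have hpq' : p.Coprime q := (Nat.coprime_primes hp hq).mpr hpq
  have hcardK : Nat.card K = p * q ^ k := by
    rw [card_closure_pair_of_mem_normalizer hbnorm (by rw [ha, hb]; exact hpq'.pow_right k), ha, hb]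
  obtain ⟨n, hcardM⟩ : ∃ n, Nat.card M = q ^ n :=
    haveI := Fact.mk hq; IsPGroup.iff_card.mp fun x => ⟨1, by simpa using hMel x⟩
  have hcardA : Nat.card A = p := by rw [Nat.card_zpowers, ha]
  have hindexA : A.index = q ^ (k + n) := by
    refine Nat.eq_of_mul_eq_mul_left hp.pos ?_
    calc p * A.index = Nat.card M * Nat.card K := by
          rw [← hcardA, card_mul_index, hMK.card_mul_card]
      _ = p * q ^ (k + n) := by rw [hcardK, hcardM]; ring
  let S : Sylow p H := (IsPGroup.of_card (n := 1) (by rw [hcardA, pow_one])).toSylow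
    (hindexA ▸ hp.coprime_iff_not_dvd.mp (hpq'.pow_right _))
  refine ⟨S.card_eq_index_normalizer.trans (hNA ▸ hMK.index_eq_card), fun P₀ => ?_⟩
  obtain ⟨g, rfl⟩ := MulAction.exists_smul_eq H S P₀
  refine ⟨MulAut.conj g a, MulAut.conj g b,
    S.mulAut_conj_mem_normalizer_smul (hNA ▸ hAK (mem_zpowers a)) g,
    S.mulAut_conj_mem_normalizer_smul (hNA ▸ subset_closure (by simp)) g,
    by rw [MulEquiv.orderOf_eq, ha], by rw [MulEquiv.orderOf_eq, hb],
    (Sylow.card_normalizer_eq _ S).trans (hNA ▸ hcardK),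
    fun j => ((MulAut.conj g).pow_mul_mul_inv_pow_eq_iff a b j).trans (hfaith j)⟩

/-- For the 2-Frobenius group `H = M ⋊ (⟨a⟩ ⋊ ⟨b⟩)` with `M` elementary abelian
`q`-group, `|a| = p`, `|b| = q^k` acting faithfully on `⟨a⟩` and `C_M(a) = 1`:
the number of Sylow `p`-subgroups of `H` is `|M|` and the normalizer of each Sylow
`p`-subgroup is a Frobenius group isomorphic to `C_p ⋊ C_{q^k}`. -/
theorem stmt9 (p q k : ℕ) (hp : p.Prime) (hq : q.Prime) (hpq : p ≠ q) (hk : 0 < k)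
    (H : Type*) [Group H] [Finite H]
    (M : Subgroup H) [M.Normal]
    (hMab : ∀ x y : M, Commute x y) (hMel : ∀ x : M, x ^ q = 1)
    (a b : H) (ha : orderOf a = p) (hb : orderOf b = q ^ k)
    (hbnorm : b ∈ Subgroup.normalizer ((Subgroup.zpowers a : Subgroup H) : Set H))
    (hfaith : ∀ j : ℕ, b ^ j * a * (b ^ j)⁻¹ = a ↔ q ^ k ∣ j)
    (hcompl : M ⊓ Subgroup.closure {a, b} = ⊥)
    (htop : M ⊔ Subgroup.closure {a, b} = ⊤)
    (hfpf : ∀ m ∈ M, Commute m a → m = 1) :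
    Nat.card (Sylow p H) = Nat.card M ∧
    ∀ P₀ : Sylow p H, ∃ u v : H,
      u ∈ Subgroup.normalizer ((P₀ : Subgroup H) : Set H) ∧ v ∈ Subgroup.normalizer ((P₀ : Subgroup H) : Set H) ∧
      orderOf u = p ∧ orderOf v = q ^ k ∧
      Nat.card (Subgroup.normalizer ((P₀ : Subgroup H) : Set H)) = p * q ^ k ∧
      (∀ j : ℕ, v ^ j * u * (v ^ j)⁻¹ = u ↔ q ^ k ∣ j) :=
  stmt9_general p q k hp hq hpq H M hMel a b ha hb hbnorm hfaith hcompl htop hfpf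
end

section
/- Let H be a finite group with normal subgroup M, let y ∈ H have prime-power order q^k with ⟨y⟩ ∩ M = 1, and suppose y normalizes a Sylow p-subgroup P₀ of H (p a prime distinct from q) with N_M(P₀) = 1. Then for m ∈ M, the element y normalizes P₀^m if and only if m ∈ C_M(y). -/
/-!
If `y` normalizes both `P₀` and `P₀^m = m⁻¹P₀m`, then `m y m⁻¹` normalizes `P₀`, hence so does the
commutator `[m, y] = (m y m⁻¹) y⁻¹`. Since `M` is normal, `[m, y]` also lies in `M`, so it lies in
`N_M(P₀) = 1`, i.e. `m` and `y` commute. The converse is immediate.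
-/

open scoped commutatorElement

namespace Subgroup

variable {G : Type*} [Group G]

theorem mem_normalizer_map_conj_iff (K : Subgroup G) (g x : G) :
    x ∈ normalizer ((K.map (MulAut.conj g).toMonoidHom : Subgroup G) : Set G) ↔
      g⁻¹ * x * g ∈ normalizer (K : Set G) := by
  rw [← map_equiv_normalizer_eq, mem_map_equiv]
  simp [MulAut.conj_symm_apply]

theorem commutatorElement_mem_of_mem_left {M : Subgroup G} [M.Normal] {m : G} (hm : m ∈ M)
    (y : G) : ⁅m, y⁆ ∈ M := by
  rw [commutatorElement_def, mul_assoc, mul_assoc]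
  exact M.mul_mem hm (by simpa [mul_assoc] using ‹M.Normal›.conj_mem _ (M.inv_mem hm) y)

theorem conj_mem_normalizer_iff_commute {K M : Subgroup G} [M.Normal]
    (hMK : M ⊓ normalizer (K : Set G) = ⊥) {y : G} (hy : y ∈ normalizer (K : Set G))
    {m : G} (hm : m ∈ M) :
    m * y * m⁻¹ ∈ normalizer (K : Set G) ↔ Commute m y := by
  rw [← commutatorElement_eq_one_iff_commute, ← mem_bot, ← hMK, mem_inf,
    commutatorElement_def, mul_mem_cancel_right (inv_mem hy)]
  exact ⟨fun h ↦ ⟨commutatorElement_mem_of_mem_left hm y, h⟩, And.right⟩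

end Subgroup

theorem stmt10_general (p : ℕ)
    (H : Type*) [Group H] (M : Subgroup H) [M.Normal]
    (P₀ : Sylow p H) (hNM : M ⊓ Subgroup.normalizer ((P₀ : Subgroup H) : Set H) = ⊥)
    (y : H)
    (hynorm : y ∈ Subgroup.normalizer ((P₀ : Subgroup H) : Set H)) :
    ∀ m ∈ M,
      (y ∈ Subgroup.normalizer (((P₀ : Subgroup H).map (MulAut.conj m⁻¹).toMonoidHom : Subgroup H) : Set H) ↔ Commute m y) := by
  intro m hm
  rw [Subgroup.mem_normalizer_map_conj_iff, inv_inv]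
  exact Subgroup.conj_mem_normalizer_iff_commute hNM hynorm hm

/-- If `y` of order `q^k` with `⟨y⟩ ∩ M = 1` normalizes a Sylow `p`-subgroup `P₀`
of `H` with `N_M(P₀) = 1`, then for `m ∈ M`, `y` normalizes `P₀^m = m⁻¹P₀m` if and
only if `m ∈ C_M(y)`. -/
theorem stmt10 (p q k : ℕ) (hp : p.Prime) (hq : q.Prime) (hpq : p ≠ q) (hk : 0 < k)
    (H : Type*) [Group H] [Finite H] (M : Subgroup H) [M.Normal]
    (P₀ : Sylow p H) (hNM : M ⊓ Subgroup.normalizer ((P₀ : Subgroup H) : Set H) = ⊥)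
    (y : H) (hy : orderOf y = q ^ k) (hyM : Subgroup.zpowers y ⊓ M = ⊥)
    (hynorm : y ∈ Subgroup.normalizer ((P₀ : Subgroup H) : Set H)) :
    ∀ m ∈ M,
      (y ∈ Subgroup.normalizer (((P₀ : Subgroup H).map (MulAut.conj m⁻¹).toMonoidHom : Subgroup H) : Set H) ↔ Commute m y) :=
  stmt10_general p H M P₀ hNM y hynorm
end

section
/- Let G be a finite group and p a prime such that q^k divides p−1 for a prime q ≠ p and integer k ≥ 1. Suppose the Fitting subgroup F(G) of G is a nontrivial p-group, G is solvable, and b ∈ G has order q^k. Then either b centralizes F(G), or G contains a subgroup of order p·q^k isomorphic to a (possibly nonfaithful) semidirect product C_p ⋊ C_{q^k} with b as complement generator; in particular, if b acts on F(G) as an automorphism of order q^k, then there exists a ∈ F(G) of order p with ⟨a⟩ normalized by b and C_p ⋊ ⟨b⟩ ≅ C_p ⋊ C_{q^k} Frobenius. -/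
/-!
Let `f` be the automorphism of `F` induced by conjugation with `b`. Since `q ^ k ∣ p - 1`,
`f ^ (p - 1) = 1`: so `f` has order prime to `p`, and on any `𝔽_p`-space it is annihilated by
`X ^ p - X`, which splits over `𝔽_p` with simple roots. Call `a` of order `p` with
`f a ∈ ⟨a⟩` an eigenvector of `f`. For a power `f ^ i ≠ 1` we look for an eigenvector moved
by `f ^ i`. On an elementary abelian `f`-stable subgroup `f` is diagonalizable, so if `f ^ i`
acts nontrivially there, some eigenvalue `μ` has `μ ^ i ≠ 1`. A coprime automorphism that is
nontrivial on an abelian `p`-group is nontrivial on its `Ω₁`, and one that is trivial on `Z(F)`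
and on `F / Z(F)` is trivial. Hence either `Z(F)` serves, or by induction on `|F|` there is a
moved eigenvector of `F / Z(F)`, and its preimage, being cyclic modulo the centre, is abelian.

This gives the first claim with `i = 1`. With `i = q ^ (k - 1)` the stabiliser of `a` in
`⟨b⟩` is a subgroup of a cyclic `q`-group missing `b ^ q ^ (k - 1)`, hence trivial.
-/

open Subgroup Polynomial

theorem Nat.coprime_self_sub_one {n : ℕ} (hn : 0 < n) : n.Coprime (n - 1) :=
  (Nat.coprime_self_sub_right hn).2 (Nat.coprime_one_right n)

theorem Module.End.exists_hasEigenvalue_not_isRoot {K V : Type*} [Field K] [AddCommGroup V]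
    [Module K V] [FiniteDimensional K V] {f g : K[X]} (hf : f.Splits) (hsep : f.Separable)
    {T : Module.End K V} (hT : aeval T f = 0) (hg : aeval T g ≠ 0) :
    ∃ μ, T.HasEigenvalue μ ∧ ¬ g.IsRoot μ := by
  by_contra! h
  have hg0 : g ≠ 0 := by rintro rfl; simp at hg
  have hm : minpoly K T ∣ f := minpoly.dvd K T hT
  obtain ⟨c, hc⟩ : minpoly K T ∣ g := by
    rw [(hf.of_dvd hsep.ne_zero hm).eq_prod_roots_of_monic (minpoly.monic (.of_finite K T)),
      Multiset.prod_X_sub_C_dvd_iff_le_roots hg0,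
      Multiset.le_iff_subset (nodup_roots (hsep.of_dvd hm))]
    intro μ hμ
    exact (mem_roots hg0).2 (h μ (hasEigenvalue_iff_isRoot.2 (isRoot_of_mem_roots hμ)))
  exact hg (by rw [hc, map_mul, minpoly.aeval, zero_mul])

theorem MulAction.pow_smul_eq_iff_dvd_of_prime_pow {M α : Type*} [Monoid M] [MulAction M α]
    {q k : ℕ} (hq : q.Prime) {m : M} {a : α} (h : m ^ q ^ k • a = a)
    (h' : m ^ q ^ (k - 1) • a ≠ a) (j : ℕ) : m ^ j • a = a ↔ q ^ k ∣ j := by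
  rw [pow_smul_eq_iff_period_dvd]
  obtain ⟨s, hs, hper⟩ := (Nat.dvd_prime_pow hq).1 (pow_smul_eq_iff_period_dvd.1 h)
  obtain rfl : s = k := by
    by_contra hsk
    exact h' (pow_smul_eq_iff_period_dvd.2 (hper ▸ Nat.pow_dvd_pow q (by omega)))
  rw [hper]

theorem Subgroup.mem_normalizer_zpowers_of_conj_mem {G : Type*} [Group G] [Finite G] {a b : G}
    (h : b * a * b⁻¹ ∈ zpowers a) : b ∈ normalizer (zpowers a : Set G) :=
  mem_normalizer_fintype fun x hx ↦ by
    obtain ⟨k, rfl⟩ := mem_zpowers_iff.1 hx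
    rw [← conj_zpow]
    exact zpow_mem h k

theorem Subgroup.isMulCommutative_comap_zpowers {G : Type*} [Group G] {N : Subgroup G}
    [N.Normal] (hN : N ≤ center G) (x : G ⧸ N) :
    IsMulCommutative ((zpowers x).comap (QuotientGroup.mk' N)) := by
  refine (((QuotientGroup.mk' N).comp (Subgroup.subtype _)).codRestrict (zpowers x)
    fun y ↦ y.2).isMulCommutative_of_isCyclic_of_ker_le_center fun y hy ↦ ?_
  have hyN : (y : G) ∈ N := (QuotientGroup.eq_one_iff _).1 (congrArg Subtype.val hy)
  exact mem_center_iff.2 fun z ↦ Subtype.ext (mem_center_iff.1 (hN hyN) z)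

namespace Monoid.End

variable {G : Type*} [Group G]

theorem surjective_of_pow_eq_one {f : Monoid.End G} {n : ℕ} (hn : n ≠ 0) (hf : f ^ n = 1) :
    Function.Surjective f := fun y ↦ ⟨(f ^ (n - 1)) y, by
  show (f * f ^ (n - 1)) y = y
  rw [← pow_succ', Nat.sub_add_cancel (Nat.one_le_iff_ne_zero.2 hn), hf]
  rfl⟩

theorem map_mem_center {f : Monoid.End G} (hf : Function.Surjective f) {z : G}
    (hz : z ∈ center G) : f z ∈ center G := by
  refine mem_center_iff.2 fun g ↦ ?_
  obtain ⟨y, rfl⟩ := hf g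
  rw [← map_mul, ← map_mul, mem_center_iff.1 hz]

theorem pow_eq_one_of_apply_eq_mul {f : Monoid.End G} {n : ℕ} (hf : f ^ n = 1) {x c : G}
    (hc : f c = c) (hx : f x = x * c) : c ^ n = 1 := by
  have hpow : ∀ j : ℕ, (f ^ j) x = x * c ^ j := by
    intro j
    induction j with
    | zero => simp
    | succ j ih =>
      rw [pow_succ', coe_mul, Function.comp_apply, ih, map_mul, map_pow, hx, hc, mul_assoc,
        ← pow_succ']
  simpa [hf] using (hpow n).symm

def restrict (f : Monoid.End G) (H : Subgroup G) (hH : ∀ x ∈ H, f x ∈ H) : Monoid.End H :=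
  (f.domRestrict H).codRestrict H fun x ↦ hH x x.2

theorem coe_restrict_pow_apply (f : Monoid.End G) {H : Subgroup G} (hH : ∀ x ∈ H, f x ∈ H)
    (j : ℕ) (x : H) : ((f.restrict H hH ^ j) x : G) = (f ^ j) x :=
  (show Function.Semiconj H.subtype (f.restrict H hH) f from fun _ ↦ rfl).iterate_right j x

theorem restrict_pow_eq_one {f : Monoid.End G} {H : Subgroup G} (hH : ∀ x ∈ H, f x ∈ H)
    {j : ℕ} (h : f ^ j = 1) : f.restrict H hH ^ j = 1 :=
  DFunLike.ext _ _ fun x ↦ Subtype.ext <| by rw [coe_restrict_pow_apply, h]; rfl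

theorem exists_moved_eigenvector_of_restrict {f : Monoid.End G} {H : Subgroup G}
    {hH : ∀ x ∈ H, f x ∈ H} {p i : ℕ}
    (h : ∃ a : H, orderOf a = p ∧ f.restrict H hH a ∈ zpowers a ∧
      (f.restrict H hH ^ i) a ≠ a) :
    ∃ a : G, orderOf a = p ∧ f a ∈ zpowers a ∧ (f ^ i) a ≠ a := by
  obtain ⟨a, hap, haz, hai⟩ := h
  refine ⟨a, by rwa [orderOf_coe], ?_, fun h ↦ hai (Subtype.ext ?_)⟩
  · have := mem_map_of_mem H.subtype haz
    rwa [MonoidHom.map_zpowers] at this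
  · rwa [coe_restrict_pow_apply]

def quotient (f : Monoid.End G) (N : Subgroup G) [N.Normal] (hN : N ≤ N.comap f) :
    Monoid.End (G ⧸ N) :=
  QuotientGroup.map N N f hN

theorem quotient_pow_apply_mk (f : Monoid.End G) {N : Subgroup G} [N.Normal]
    (hN : N ≤ N.comap f) (j : ℕ) (x : G) : (f.quotient N hN ^ j) x = ((f ^ j) x : G ⧸ N) :=
  ((show Function.Semiconj (QuotientGroup.mk' N) f (f.quotient N hN) from
    fun _ ↦ rfl).iterate_right j x).symm

theorem exists_moved_eigenvector_of_module {p : ℕ} [Fact p.Prime] {V : Type*} [CommGroup V]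
    [Finite V] [Module (ZMod p) (Additive V)] {f : Monoid.End V} (hf : f ^ (p - 1) = 1) {i : ℕ}
    (hi : f ^ i ≠ 1) : ∃ a : V, orderOf a = p ∧ f a ∈ zpowers a ∧ (f ^ i) a ≠ a := by
  let T : Module.End (ZMod p) (Additive V) := (MonoidHom.toAdditive f).toZModLinearMap p
  have hT : ∀ (j : ℕ) (v : Additive V), ((T ^ j) v).toMul = (f ^ j) v.toMul := fun j v ↦ by
    rw [Module.End.coe_pow, coe_pow]
    exact (show Function.Semiconj Additive.toMul T f from fun _ ↦ rfl).iterate_right j v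
  have hTp : aeval T (X ^ p - X : (ZMod p)[X]) = 0 := by
    have hfp : f ^ p = f := by
      rw [← Nat.sub_add_cancel (Fact.out : p.Prime).one_le, pow_succ, hf, one_mul]
    have : T ^ p = T := LinearMap.ext fun v ↦ Additive.toMul.injective <| by rw [hT, hfp]; rfl
    simp [this]
  have hTi : aeval T (X ^ i - 1 : (ZMod p)[X]) ≠ 0 := by
    contrapose! hi
    refine MonoidHom.ext fun x ↦ show (f ^ i) x = x from ?_
    have := congrArg (fun S : Module.End (ZMod p) (Additive V) ↦ (S (.ofMul x)).toMul) hi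
    simpa [hT, div_eq_one] using this
  obtain ⟨μ, hμ, hμi⟩ := T.exists_hasEigenvalue_not_isRoot
    (by simpa [ZMod.card] using FiniteField.splits_X_pow_card_sub_X (p := p) (K := ZMod p))
    (galois_poly_separable p p dvd_rfl) hTp hTi
  obtain ⟨v, hv⟩ := hμ.exists_hasEigenvector
  have hv1 : v.toMul ≠ 1 := fun h ↦ hv.2 (Additive.toMul.injective h)
  have hvp : v.toMul ^ p = 1 := by
    rw [← toMul_nsmul, ← Nat.cast_smul_eq_nsmul (ZMod p), ZMod.natCast_self, zero_smul]; rfl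
  have hfv : f v.toMul = v.toMul ^ μ.val := by
    rw [← toMul_nsmul, ← Nat.cast_smul_eq_nsmul (ZMod p), ZMod.natCast_zmod_val,
      ← hv.apply_eq_smul]
    rfl
  refine ⟨v.toMul, orderOf_eq_prime hvp hv1, hfv ▸ pow_mem (mem_zpowers _) _,
    fun h ↦ hμi ?_⟩
  rw [← hT] at h
  replace h := Additive.toMul.injective h
  rw [hv.pow_apply] at h
  have : (μ ^ i - 1) • v = 0 := by rw [sub_smul, h, one_smul, sub_self]
  simpa [sub_eq_zero] using (smul_eq_zero.1 this).resolve_right hv.2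

end Monoid.End

namespace IsPGroup

open Monoid.End

variable {p : ℕ}

theorem apply_eq_self_of_apply_eq_mul {G : Type*} [Group G] (hG : IsPGroup p G) {n : ℕ}
    (hn : p.Coprime n) {f : Monoid.End G} (hf : f ^ n = 1) {x c : G} (hc : f c = c)
    (hx : f x = x * c) : f x = x := by
  have hc1 : c = 1 := (hG.powEquiv hn).injective <| by
    simp [powEquiv_apply, f.pow_eq_one_of_apply_eq_mul hf hc hx]
  rw [hx, hc1, mul_one]

theorem exists_pow_eq_one_apply_ne {A : Type*} [CommGroup A] (hA : IsPGroup p A) {n : ℕ}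
    (hn : p.Coprime n) {f : Monoid.End A} (hf : f ^ n = 1) (hf1 : f ≠ 1) :
    ∃ x : A, x ^ p = 1 ∧ f x ≠ x := by
  by_contra! hfix
  refine hf1 (MonoidHom.ext fun x ↦ show f x = x from ?_)
  obtain ⟨m, hm⟩ := hA x
  induction m generalizing x with
  | zero => rw [pow_zero, pow_one] at hm; simp [hm]
  | succ m ih =>
    have hxp : f (x ^ p) = x ^ p := ih _ (by rw [← pow_mul, ← pow_succ']; exact hm)
    refine hA.apply_eq_self_of_apply_eq_mul hn hf (hfix _ ?_) (mul_inv_cancel_left x (f x)).symm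
    rw [mul_pow, inv_pow, ← map_pow, hxp, inv_mul_cancel]

variable [Fact p.Prime]

theorem card_quotient_center_lt {P : Type*} [Group P] [Finite P] [Nontrivial P]
    (hP : IsPGroup p P) : Nat.card (P ⧸ center P) < Nat.card P := by
  rw [card_eq_card_quotient_mul_card_subgroup (center P)]
  exact lt_mul_right Nat.card_pos (Finite.one_lt_card_iff_nontrivial.2 hP.center_nontrivial)

theorem exists_moved_eigenvector_of_commGroup {A : Type*} [CommGroup A] [Finite A]
    (hA : IsPGroup p A) {f : Monoid.End A} (hf : f ^ (p - 1) = 1) {i : ℕ} (hi : f ^ i ≠ 1) :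
    ∃ a : A, orderOf a = p ∧ f a ∈ zpowers a ∧ (f ^ i) a ≠ a := by
  have hfi : (f ^ i) ^ (p - 1) = 1 := by rw [← pow_mul, mul_comm, pow_mul, hf, one_pow]
  obtain ⟨x, hxp, hx⟩ := hA.exists_pow_eq_one_apply_ne
    (Nat.coprime_self_sub_one (Fact.out : p.Prime).pos) hfi hi
  let Ω := (powMonoidHom p : A →* A).ker
  have hΩ : ∀ y ∈ Ω, f y ∈ Ω := fun y hy ↦ by
    rw [MonoidHom.mem_ker, powMonoidHom_apply, ← map_pow, show y ^ p = 1 from hy, map_one]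
  let _ : Module (ZMod p) (Additive Ω) :=
    AddCommGroup.zmodModule fun y ↦ Additive.toMul.injective (Subtype.ext y.toMul.2)
  refine exists_moved_eigenvector_of_restrict (hH := hΩ)
    (exists_moved_eigenvector_of_module (restrict_pow_eq_one hΩ hf) fun h ↦ hx ?_)
  simpa [h] using (f.coe_restrict_pow_apply hΩ i ⟨x, hxp⟩).symm

variable {P : Type*} [Group P] [Finite P]

open scoped IsMulCommutative in
theorem exists_moved_eigenvector_of_isMulCommutative (hP : IsPGroup p P) {f : Monoid.End P}
    (hf : f ^ (p - 1) = 1) {i : ℕ} (B : Subgroup P) [IsMulCommutative B]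
    (hB : ∀ x ∈ B, f x ∈ B) (hmove : ∃ x ∈ B, (f ^ i) x ≠ x) :
    ∃ a : P, orderOf a = p ∧ f a ∈ zpowers a ∧ (f ^ i) a ≠ a := by
  obtain ⟨x, hxB, hx⟩ := hmove
  refine exists_moved_eigenvector_of_restrict (hH := hB)
    ((hP.to_subgroup B).exists_moved_eigenvector_of_commGroup (restrict_pow_eq_one hB hf)
      fun h ↦ hx ?_)
  simpa [h] using (f.coe_restrict_pow_apply hB i ⟨x, hxB⟩).symm

theorem exists_moved_eigenvector (hP : IsPGroup p P) {f : Monoid.End P} (hf : f ^ (p - 1) = 1)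
    {i : ℕ} (hi : f ^ i ≠ 1) :
    ∃ a : P, orderOf a = p ∧ f a ∈ zpowers a ∧ (f ^ i) a ≠ a := by
  induction hcard : Nat.card P using Nat.strong_induction_on generalizing P with
  | _ N ih =>
  have hp := (Fact.out : p.Prime)
  have hZ : center P ≤ (center P).comap f := fun z ↦
    map_mem_center (surjective_of_pow_eq_one (Nat.sub_ne_zero_of_lt hp.one_lt) hf)
  by_cases hmove : ∃ z ∈ center P, (f ^ i) z ≠ z
  · exact hP.exists_moved_eigenvector_of_isMulCommutative hf (center P) hZ hmove
  push Not at hmove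
  let fbar := f.quotient (center P) hZ
  have hfbar : fbar ^ (p - 1) = 1 := DFunLike.ext _ _ fun y ↦
    QuotientGroup.induction_on y fun x ↦ by rw [quotient_pow_apply_mk, hf]; rfl
  have hibar : fbar ^ i ≠ 1 := fun h ↦ hi <| DFunLike.ext _ _ fun x ↦ show (f ^ i) x = x by
    have hc : x⁻¹ * (f ^ i) x ∈ center P :=
      QuotientGroup.eq.1 (by rw [← quotient_pow_apply_mk f hZ, h]; rfl)
    refine hP.apply_eq_self_of_apply_eq_mul (Nat.coprime_self_sub_one hp.pos) ?_ (hmove _ hc)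
      (mul_inv_cancel_left x _).symm
    rw [← pow_mul, mul_comm, pow_mul, hf, one_pow]
  have : Nontrivial P := by
    by_contra! h
    exact hi (DFunLike.ext _ _ fun x ↦ Subsingleton.elim _ _)
  obtain ⟨xbar, -, hxz, hxi⟩ :=
    ih _ (hcard ▸ hP.card_quotient_center_lt) (hP.to_quotient _) hfbar hibar rfl
  obtain ⟨x, rfl⟩ := QuotientGroup.mk_surjective xbar
  let B := (zpowers (x : P ⧸ center P)).comap (QuotientGroup.mk' (center P))
  have : IsMulCommutative B := isMulCommutative_comap_zpowers le_rfl _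
  refine hP.exists_moved_eigenvector_of_isMulCommutative hf B (fun y hy ↦ ?_)
    ⟨x, mem_zpowers _, fun h ↦ hxi (by rw [quotient_pow_apply_mk, h])⟩
  obtain ⟨k, hk : (x : P ⧸ center P) ^ k = y⟩ := mem_zpowers_iff.1 (mem_comap.1 hy)
  show fbar y ∈ zpowers (x : P ⧸ center P)
  rw [← hk, map_zpow]
  exact zpow_mem hxz k

theorem exists_mem_normalizer_zpowers_conj_ne {G : Type*} [Group G] [Finite G]
    {F : Subgroup G} [F.Normal] (hF : IsPGroup p F) {b : G} (hb : b ^ (p - 1) = 1) {i : ℕ}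
    (hi : ∃ x ∈ F, b ^ i * x * (b ^ i)⁻¹ ≠ x) :
    ∃ a ∈ F, orderOf a = p ∧ b ∈ normalizer (zpowers a : Set G) ∧
      b ^ i * a * (b ^ i)⁻¹ ≠ a := by
  let f : G →* Monoid.End F :=
    (MulDistribMulAction.toMonoidEnd (MulAut F) F).comp MulAut.conjNormal
  have hf : ∀ (j : ℕ) (x : F), ((f b ^ j) x : G) = b ^ j * x * (b ^ j)⁻¹ := fun j x ↦ by
    rw [← map_pow]
    exact MulAut.conjNormal_apply _ _
  obtain ⟨x, hxF, hx⟩ := hi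
  obtain ⟨a, hap, hba, hia⟩ := hF.exists_moved_eigenvector (f := f b)
    (by rw [← map_pow, hb, map_one])
    fun h ↦ hx ((hf i ⟨x, hxF⟩).symm.trans (by rw [h]; rfl))
  refine ⟨a, a.2, by rwa [orderOf_coe], mem_normalizer_zpowers_of_conj_mem ?_, ?_⟩
  · have := mem_map_of_mem F.subtype hba
    rw [MonoidHom.map_zpowers] at this
    have h1 : ((f b) a : G) = b * a * b⁻¹ := by simpa using hf 1 a
    exact h1 ▸ this
  · rwa [← hf, ne_eq, ← Subtype.ext_iff]

end IsPGroup

theorem stmt12_general (p q k : ℕ) (hp : p.Prime) (hq : q.Prime) (hk : 0 < k)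
    (hdvd : q ^ k ∣ p - 1)
    (G : Type*) [Group G] [Finite G]
    (F : Subgroup G) [F.Normal]
    (hFp : IsPGroup p F)
    (b : G) (hb : orderOf b = q ^ k) :
    ((∀ x ∈ F, Commute b x) ∨
      ∃ a ∈ F, orderOf a = p ∧ b ∈ Subgroup.normalizer (Subgroup.zpowers a : Set G)) ∧
    ((∀ j : ℕ, (∀ x ∈ F, b ^ j * x * (b ^ j)⁻¹ = x) ↔ q ^ k ∣ j) →
      ∃ a ∈ F, orderOf a = p ∧ b ∈ Subgroup.normalizer (Subgroup.zpowers a : Set G) ∧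
        ∀ j : ℕ, (b ^ j * a * (b ^ j)⁻¹ = a ↔ q ^ k ∣ j)) := by
  have : Fact p.Prime := ⟨hp⟩
  have hbp : b ^ (p - 1) = 1 := orderOf_dvd_iff_pow_eq_one.1 (hb ▸ hdvd)
  refine ⟨?_, fun hord ↦ ?_⟩
  · by_cases hc : ∀ x ∈ F, Commute b x
    · exact .inl hc
    push Not at hc
    obtain ⟨x, hxF, hx⟩ := hc
    obtain ⟨a, haF, hap, hba, -⟩ := hFp.exists_mem_normalizer_zpowers_conj_ne hbp (i := 1)
      ⟨x, hxF, by rwa [pow_one, ne_eq, mul_inv_eq_iff_eq_mul]⟩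
    exact .inr ⟨a, haF, hap, hba⟩
  have hi : ¬ q ^ k ∣ q ^ (k - 1) := fun h ↦
    absurd ((Nat.pow_dvd_pow_iff_le_right hq.one_lt).1 h) (by omega)
  rw [← hord] at hi
  push Not at hi
  obtain ⟨a, haF, hap, hba, hia⟩ := hFp.exists_mem_normalizer_zpowers_conj_ne hbp hi
  refine ⟨a, haF, hap, hba, fun j ↦ ?_⟩
  simp only [← ConjAct.toConjAct_smul, map_pow] at hia ⊢
  refine MulAction.pow_smul_eq_iff_dvd_of_prime_pow hq ?_ hia j
  rw [← map_pow, ← hb, pow_orderOf_eq_one, map_one, one_smul]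

/-- Let `G` be finite solvable, `F` its Fitting subgroup, assumed to be a nontrivial
`p`-group, `q ≠ p` a prime with `q^k ∣ p - 1`, and `b ∈ G` of order `q^k`. Then either
`b` centralizes `F`, or `G` has a subgroup `⟨a⟩ ⋊ ⟨b⟩ ≅ C_p ⋊ C_{q^k}` with `a ∈ F` of
order `p`; moreover if `b` acts on `F` as an automorphism of order `q^k`, then `a` can
be chosen so that `b` acts faithfully (Frobenius) on `⟨a⟩`. -/
theorem stmt12 (p q k : ℕ) (hp : p.Prime) (hq : q.Prime) (hpq : p ≠ q) (hk : 0 < k)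
    (hdvd : q ^ k ∣ p - 1)
    (G : Type*) [Group G] [Finite G] [Group.IsSolvable G]
    (F : Subgroup G) [F.Normal] (hFnil : Group.IsNilpotent F)
    (hFitting : ∀ N : Subgroup G, N.Normal → Group.IsNilpotent N → N ≤ F)
    (hFp : IsPGroup p F) (hFne : F ≠ ⊥)
    (b : G) (hb : orderOf b = q ^ k) :
    ((∀ x ∈ F, Commute b x) ∨
      ∃ a ∈ F, orderOf a = p ∧ b ∈ Subgroup.normalizer (Subgroup.zpowers a : Set G)) ∧
    ((∀ j : ℕ, (∀ x ∈ F, b ^ j * x * (b ^ j)⁻¹ = x) ↔ q ^ k ∣ j) →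
      ∃ a ∈ F, orderOf a = p ∧ b ∈ Subgroup.normalizer (Subgroup.zpowers a : Set G) ∧
        ∀ j : ℕ, (b ^ j * a * (b ^ j)⁻¹ = a ↔ q ^ k ∣ j)) :=
  stmt12_general p q k hp hq hk hdvd G F hFp b hb
end
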